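/- Let φ be a 3-CNF formula over variables Fin p, and form the training sample consisting of the big sentence together with, for each variable i : Fin p, the negation sentence [h_S, h_{X_{(i,false)}}, h_{Z_i}, h_{X_{(i,true)}}] where forget h_{Z_i} = Finsupp.single z_{(i,false)} 1 + Finsupp.single z_{(i,true)} 1. Then this sample has a solution (all lifts functional, with the prescribed images under forget, the same h_S and h_{X_L} used in every sentence in which the corresponding word occurs, and every sentence grammatical for s) if and only if φ is satisfiable, i.e. there exists a : Fin p → Bool such that every clause of φ contains a literal (i, b) with a i = b. (Mathematical core of the theorem that grammar induction from a self-dual compact closed category to a compact closed category is NP-complete.) -/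

import Mathlib

/-- The positive part of a signed multiset: `posPart μ a = μ (a, false)`. -/
noncomputable def posPart {α : Type*} (μ : α × Bool →₀ ℕ) : α →₀ ℕ :=
  Finsupp.comapDomain (fun a => (a, false)) μ (fun _ _ _ _ h => congrArg Prod.fst h)

/-- The negative part of a signed multiset: `negPart μ a = μ (a, true)`. -/
noncomputable def negPart {α : Type*} (μ : α × Bool →₀ ℕ) : α →₀ ℕ :=
  Finsupp.comapDomain (fun a => (a, true)) μ (fun _ _ _ _ h => congrArg Prod.fst h)

/-- Forgetting the signs: `forget μ a = μ (a, false) + μ (a, true)`. -/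
noncomputable def forget {α : Type*} (μ : α × Bool →₀ ℕ) : α →₀ ℕ :=
  posPart μ + negPart μ

/-- The signed sum: `sgn μ a = (μ (a, false) : ℤ) − (μ (a, true) : ℤ)`. -/
noncomputable def sgn {α : Type*} (μ : α × Bool →₀ ℕ) : α →₀ ℤ :=
  (posPart μ).mapRange (Nat.cast : ℕ → ℤ) Nat.cast_zero
    - (negPart μ).mapRange (Nat.cast : ℕ → ℤ) Nat.cast_zero

/-- A signed multiset is functional if it is a single generator, or it has at least one
occurrence with exponent `+1` and at least one with exponent `−1`. -/
def Functional {α : Type*} (μ : α × Bool →₀ ℕ) : Prop :=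
  (∃ a : α, μ = Finsupp.single (a, false) 1) ∨
    (∃ a b : α, 0 < μ (a, false) ∧ 0 < μ (b, true))

/-- A list of signed multisets is grammatical for `s` if the signed sums of its entries
add up to `Finsupp.single s 1`. -/
noncomputable def Grammatical {α : Type*} (s : α) (l : List (α × Bool →₀ ℕ)) : Prop :=
  (l.map sgn).sum = Finsupp.single s 1

/-- The list of all literal occurrences of a 3-CNF formula. -/
def lits {p : ℕ} (φ : List ((Fin p × Bool) × (Fin p × Bool) × (Fin p × Bool))) :
    List (Fin p × Bool) :=
  φ.flatMap fun c => [c.1, c.2.1, c.2.2]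

/-- The semantic type `t c = d + z_{L₁} + z_{L₂} + z_{L₃}` of a clause `c`. -/
noncomputable def clauseType {α : Type*} {p : ℕ} (d : α) (z : Fin p × Bool → α)
    (c : (Fin p × Bool) × (Fin p × Bool) × (Fin p × Bool)) : α →₀ ℕ :=
  Finsupp.single d 1 + Finsupp.single (z c.1) 1 + Finsupp.single (z c.2.1) 1 +
    Finsupp.single (z c.2.2) 1

/-- The semantic type `v L = z_L + 2 • y_L` of a literal `L`. -/
noncomputable def litType {α : Type*} {p : ℕ} (z y : Fin p × Bool → α) (L : Fin p × Bool) :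
    α →₀ ℕ :=
  Finsupp.single (z L) 1 + 2 • Finsupp.single (y L) 1

/-- The big sentence: the word `S`, then for each clause `c_j` the words `C_j` and `D_j`,
then `n_L` copies of the word `X_L` for each literal `L` (one copy per occurrence of `L`
in the formula), all replaced by the chosen lifts. -/
noncomputable def bigSentence {α : Type*} {p : ℕ}
    (φ : List ((Fin p × Bool) × (Fin p × Bool) × (Fin p × Bool)))
    (hS : α × Bool →₀ ℕ) (hC hD : Fin φ.length → (α × Bool →₀ ℕ))
    (hX : Fin p × Bool → (α × Bool →₀ ℕ)) : List (α × Bool →₀ ℕ) :=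
  hS :: (((List.finRange φ.length).flatMap fun j => [hC j, hD j]) ++ (lits φ).map hX)

/-- A solution of the training sample consisting of the big sentence together with, for
each variable `i`, the negation sentence `[h_S, h_{X_{(i,false)}}, h_{Z_i}, h_{X_{(i,true)}}]`:
all lifts are functional, have the prescribed images under `forget`, the same `h_S` and
`h_{X_L}` are used in every sentence, and every sentence is grammatical for `s`. -/
noncomputable def SampleSolution {α : Type*} {p : ℕ} (s d : α) (z y : Fin p × Bool → α)
    (φ : List ((Fin p × Bool) × (Fin p × Bool) × (Fin p × Bool)))
    (hS : α × Bool →₀ ℕ) (hC hD : Fin φ.length → (α × Bool →₀ ℕ))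
    (hX : Fin p × Bool → (α × Bool →₀ ℕ)) (hZ : Fin p → (α × Bool →₀ ℕ)) : Prop :=
  Functional hS ∧ forget hS = Finsupp.single s 1 ∧
  (∀ j : Fin φ.length, Functional (hC j) ∧ forget (hC j) = clauseType d z (φ.get j)) ∧
  (∀ j : Fin φ.length, Functional (hD j) ∧ forget (hD j) = Finsupp.single d 1) ∧
  (∀ L : Fin p × Bool, Functional (hX L) ∧ forget (hX L) = litType z y L) ∧
  (∀ i : Fin p, Functional (hZ i) ∧
    forget (hZ i) = Finsupp.single (z (i, false)) 1 + Finsupp.single (z (i, true)) 1) ∧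
  Grammatical s (bigSentence φ hS hC hD hX) ∧
  (∀ i : Fin p, Grammatical s [hS, hX (i, false), hZ i, hX (i, true)])

/-!
The lifts of `S` and of the `D_j` are forced to be the generators `s` and `d`. Call a literal `L`
true when `h_{X_L}` uses `z_L` with exponent `-1`; the negation sentence of `i` makes exactly one of
`(i, false)` and `(i, true)` true. In the big sentence, the generators `d` and `z_L` for false `L`
occur with exponent `-1` in no lift other than the `h_{C_j}`, and the counts balance exactly, so
every `h_{C_j}` uses them only with exponent `-1`. The occurrence with exponent `+1` that makes
`h_{C_j}` functional is therefore some `z_L` with `L` a true literal of `c_j`. Conversely, a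
satisfying assignment dictates lifts of exactly this shape.
-/

open Finsupp

section SignedMultiset

variable {α : Type*}

@[simp]
lemma forget_apply (μ : α × Bool →₀ ℕ) (a : α) : forget μ a = μ (a, false) + μ (a, true) :=
  rfl

@[simp]
lemma sgn_apply (μ : α × Bool →₀ ℕ) (a : α) :
    sgn μ a = (μ (a, false) : ℤ) - (μ (a, true) : ℤ) :=
  rfl

lemma forget_add (μ ν : α × Bool →₀ ℕ) : forget (μ + ν) = forget μ + forget ν := by
  ext a; simp only [forget_apply, Finsupp.add_apply]; ring

lemma sgn_add (μ ν : α × Bool →₀ ℕ) : sgn (μ + ν) = sgn μ + sgn ν := by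
  ext a; simp only [sgn_apply, Finsupp.add_apply]; push_cast; ring

@[simp]
lemma forget_single (a : α) (b : Bool) (n : ℕ) : forget (single (a, b) n) = single a n := by
  ext g
  cases b <;> by_cases h : a = g <;> simp [h]

@[simp]
lemma sgn_single_false (a : α) (n : ℕ) : sgn (single (a, false) n) = single a (n : ℤ) := by
  ext g
  by_cases h : a = g <;> simp [h]

@[simp]
lemma sgn_single_true (a : α) (n : ℕ) : sgn (single (a, true) n) = -single a (n : ℤ) := by
  ext g
  by_cases h : a = g <;> simp [h]

lemma sgn_single_not_add_sgn_single (a : α) (b : Bool) (n : ℕ) :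
    sgn (single (a, !b) n) + sgn (single (a, b) n) = 0 := by
  cases b <;> simp

lemma pos_forget_apply_of_pos {μ : α × Bool →₀ ℕ} {a : α} {b : Bool} (h : 0 < μ (a, b)) :
    0 < forget μ a := by
  cases b <;> simp only [forget_apply] <;> omega

lemma apply_eq_zero_of_forget_apply_eq_zero {μ : α × Bool →₀ ℕ} {a : α}
    (h : forget μ a = 0) (b : Bool) : μ (a, b) = 0 := by
  rw [forget_apply] at h
  cases b <;> omega

namespace Functional

lemma exists_pos {μ : α × Bool →₀ ℕ} (h : Functional μ) : ∃ a, 0 < μ (a, false) := by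
  rcases h with ⟨a, rfl⟩ | ⟨a, -, ha, -⟩
  · exact ⟨a, by simp⟩
  · exact ⟨a, ha⟩

lemma eq_single_of_forget_eq_single {μ : α × Bool →₀ ℕ} {a : α} (h : Functional μ)
    (hμ : forget μ = single a 1) : μ = single (a, false) 1 := by
  rcases h with ⟨w, rfl⟩ | ⟨w, w', hw, hw'⟩
  · rw [forget_single] at hμ
    rw [(single_left_inj one_ne_zero).mp hμ]
  · have h1 := DFunLike.congr_fun hμ w
    have h2 := DFunLike.congr_fun hμ w'
    classical
    simp only [forget_apply, single_apply] at h1 h2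
    split_ifs at h1 h2 <;> subst_vars <;> omega

lemma sgn_apply_eq_neg_of_forget_eq_pair {μ : α × Bool →₀ ℕ} {u v : α} (h : Functional μ)
    (huv : u ≠ v) (hμ : forget μ = single u 1 + single v 1) : sgn μ u = -sgn μ v := by
  have hu : forget μ u = 1 := by simp [hμ, single_eq_of_ne huv]
  have hv : forget μ v = 1 := by simp [hμ, single_eq_of_ne huv.symm]
  have hmem : ∀ g b, 0 < μ (g, b) → g = u ∨ g = v := fun g b hgb => by
    have := pos_forget_apply_of_pos hgb
    by_contra! hne
    simp [hμ, single_eq_of_ne hne.1, single_eq_of_ne hne.2] at this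
  rcases h with ⟨w, rfl⟩ | ⟨a, b, ha, hb⟩
  · classical
    simp [single_apply] at hu hv
    exact absurd (hu.symm.trans hv) huv
  · simp only [forget_apply] at hu hv
    simp only [sgn_apply]
    rcases hmem a false ha with rfl | rfl <;> rcases hmem b true hb with rfl | rfl <;> omega

end Functional

lemma grammatical_cons_iff {s : α} {μ : α × Bool →₀ ℕ} (hμ : sgn μ = single s 1)
    (l : List (α × Bool →₀ ℕ)) : Grammatical s (μ :: l) ↔ (l.map sgn).sum = 0 := by
  simp [Grammatical, hμ]

end SignedMultiset

section Sample

variable {α : Type*} {p : ℕ}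

lemma grammatical_bigSentence_iff {s : α}
    {φ : List ((Fin p × Bool) × (Fin p × Bool) × (Fin p × Bool))}
    {hS : α × Bool →₀ ℕ} (hS_sgn : sgn hS = single s 1) (hC hD : Fin φ.length → (α × Bool →₀ ℕ))
    (hX : Fin p × Bool → (α × Bool →₀ ℕ)) :
    Grammatical s (bigSentence φ hS hC hD hX) ↔
      ∑ j : Fin φ.length, (sgn (hC j) + sgn (hD j) + sgn (hX (φ.get j).1) +
        sgn (hX (φ.get j).2.1) + sgn (hX (φ.get j).2.2)) = 0 := by
  rw [bigSentence, grammatical_cons_iff hS_sgn]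
  simp only [lits, List.flatMap, List.map_append, List.sum_append, List.map_flatten,
    List.sum_flatten, List.map_map]
  rw [← Fin.sum_univ_def, ← Fin.sum_univ_fun_getElem, ← Finset.sum_add_distrib]
  simp only [Function.comp_apply, List.map_cons, List.map_nil, List.sum_cons, List.sum_nil,
    add_zero, List.get_eq_getElem, add_assoc]

namespace SampleSolution

variable {s d : α} {z y : Fin p × Bool → α}
  {φ : List ((Fin p × Bool) × (Fin p × Bool) × (Fin p × Bool))}
  {hS : α × Bool →₀ ℕ} {hC hD : Fin φ.length → (α × Bool →₀ ℕ)}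
  {hX : Fin p × Bool → (α × Bool →₀ ℕ)} {hZ : Fin p → (α × Bool →₀ ℕ)}

lemma sgn_hS (h : SampleSolution s d z y φ hS hC hD hX hZ) : sgn hS = single s 1 := by
  simp [h.1.eq_single_of_forget_eq_single h.2.1]

lemma hD_eq (h : SampleSolution s d z y φ hS hC hD hX hZ) (j : Fin φ.length) :
    hD j = single (d, false) 1 :=
  (h.2.2.2.1 j).1.eq_single_of_forget_eq_single (h.2.2.2.1 j).2

lemma sum_cells_eq_zero (h : SampleSolution s d z y φ hS hC hD hX hZ) :
    ∑ j : Fin φ.length, (sgn (hC j) + sgn (hD j) + sgn (hX (φ.get j).1) +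
      sgn (hX (φ.get j).2.1) + sgn (hX (φ.get j).2.2)) = 0 :=
  (grammatical_bigSentence_iff h.sgn_hS hC hD hX).mp h.2.2.2.2.2.2.1

lemma negation_eq_zero (h : SampleSolution s d z y φ hS hC hD hX hZ) (i : Fin p) :
    sgn (hX (i, false)) + (sgn (hZ i) + sgn (hX (i, true))) = 0 := by
  simpa using (grammatical_cons_iff h.sgn_hS _).mp (h.2.2.2.2.2.2.2 i)

lemma forget_hX_apply (h : SampleSolution s d z y φ hS hC hD hX hZ) (L : Fin p × Bool) (g : α) :
    forget (hX L) g = single (z L) 1 g + 2 * single (y L) 1 g := by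
  simp only [(h.2.2.2.2.1 L).2, litType, Finsupp.add_apply, Finsupp.smul_apply, smul_eq_mul]

lemma forget_hX_apply_z (hzy : ∀ L L', z L ≠ y L') (h : SampleSolution s d z y φ hS hC hD hX hZ)
    (L : Fin p × Bool) : forget (hX L) (z L) = 1 := by
  simp [h.forget_hX_apply, single_eq_of_ne (hzy L L)]

lemma hX_apply_z_of_ne (hz : Function.Injective z) (hzy : ∀ L L', z L ≠ y L')
    (h : SampleSolution s d z y φ hS hC hD hX hZ) {L L' : Fin p × Bool} (hne : L' ≠ L)
    (b : Bool) : hX L' (z L, b) = 0 :=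
  apply_eq_zero_of_forget_apply_eq_zero (by
    simp [h.forget_hX_apply, single_eq_of_ne (hzy L L'), single_eq_of_ne (hz.ne hne.symm)]) b

lemma hX_apply_d (hdz : ∀ L, d ≠ z L) (hdy : ∀ L, d ≠ y L)
    (h : SampleSolution s d z y φ hS hC hD hX hZ) (L : Fin p × Bool) (b : Bool) :
    hX L (d, b) = 0 :=
  apply_eq_zero_of_forget_apply_eq_zero (by
    simp [h.forget_hX_apply, single_eq_of_ne (hdz L), single_eq_of_ne (hdy L)]) b

lemma hX_apply_z_true_pos_iff (hz : Function.Injective z) (hzy : ∀ L L', z L ≠ y L')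
    (h : SampleSolution s d z y φ hS hC hD hX hZ) (i : Fin p) :
    0 < hX (i, false) (z (i, false), true) ↔ hX (i, true) (z (i, true), true) = 0 := by
  have hne : z (i, false) ≠ z (i, true) := hz.ne (by simp)
  have hZ_opp := (h.2.2.2.2.2.1 i).1.sgn_apply_eq_neg_of_forget_eq_pair hne (h.2.2.2.2.2.1 i).2
  have hf := DFunLike.congr_fun (h.negation_eq_zero i) (z (i, false))
  have ht := DFunLike.congr_fun (h.negation_eq_zero i) (z (i, true))
  have hXf := forget_hX_apply_z hzy h (i, false)
  have hXt := forget_hX_apply_z hzy h (i, true)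
  simp only [Finsupp.add_apply, Finsupp.zero_apply, sgn_apply, forget_apply,
    h.hX_apply_z_of_ne hz hzy (L := (i, false)) (L' := (i, true)) (by simp),
    h.hX_apply_z_of_ne hz hzy (L := (i, true)) (L' := (i, false)) (by simp)] at hZ_opp hf ht hXf hXt
  omega

/-- If no lift other than the `h_{C_j}` uses `g` with exponent `-1`, the clause blocks of the big
sentence contribute the nonnegative amounts `2 * h_{C_j} (g, false)` at `g`, which must sum to
zero. -/
lemma hC_apply_false_eq_zero (h : SampleSolution s d z y φ hS hC hD hX hZ) {g : α}
    (hgX : ∀ L, hX L (g, true) = 0) (hgy : ∀ L, y L ≠ g) (j : Fin φ.length) :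
    hC j (g, false) = 0 := by
  have hcell : ∀ j : Fin φ.length, (sgn (hC j) + sgn (hD j) + sgn (hX (φ.get j).1) +
      sgn (hX (φ.get j).2.1) + sgn (hX (φ.get j).2.2)) g = 2 * (hC j (g, false) : ℤ) := by
    intro j
    have hCg := DFunLike.congr_fun (h.2.2.1 j).2 g
    have hXg := fun L => h.forget_hX_apply L g
    simp only [forget_apply, hgX, add_zero, single_eq_of_ne' (hgy _), mul_zero] at hXg
    have hDg : hD j (g, true) = 0 := by simp [h.hD_eq]
    simp only [clauseType, Finsupp.add_apply, ← (h.2.2.2.1 j).2, forget_apply, hDg, ← hXg]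
      at hCg
    simp only [Finsupp.add_apply, sgn_apply, hgX, hDg]
    push_cast
    omega
  have hsum := DFunLike.congr_fun h.sum_cells_eq_zero g
  simp only [Finsupp.finsetSum_apply, hcell, Finsupp.zero_apply] at hsum
  rw [← Finset.mul_sum, mul_eq_zero, or_iff_right two_ne_zero] at hsum
  have : ∑ j : Fin φ.length, hC j (g, false) = 0 := by exact_mod_cast hsum
  exact Finset.sum_eq_zero_iff.mp this j (Finset.mem_univ j)

lemma hC_apply_d (hdz : ∀ L, d ≠ z L) (hdy : ∀ L, d ≠ y L)
    (h : SampleSolution s d z y φ hS hC hD hX hZ) (j : Fin φ.length) : hC j (d, false) = 0 :=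
  h.hC_apply_false_eq_zero (fun L => h.hX_apply_d hdz hdy L true) (fun L => (hdy L).symm) j

lemma hC_apply_z (hz : Function.Injective z) (hzy : ∀ L L', z L ≠ y L')
    (h : SampleSolution s d z y φ hS hC hD hX hZ) {L : Fin p × Bool}
    (hL : hX L (z L, true) = 0) (j : Fin φ.length) : hC j (z L, false) = 0 := by
  refine h.hC_apply_false_eq_zero (fun L' => ?_) (fun L' => (hzy L L').symm) j
  by_cases hL' : L' = L
  · rwa [hL']
  · exact h.hX_apply_z_of_ne hz hzy hL' true

lemma exists_literal_pos (hz : Function.Injective z) (hdz : ∀ L, d ≠ z L) (hdy : ∀ L, d ≠ y L)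
    (hzy : ∀ L L', z L ≠ y L') (h : SampleSolution s d z y φ hS hC hD hX hZ)
    (j : Fin φ.length) : ∃ L ∈ [(φ.get j).1, (φ.get j).2.1, (φ.get j).2.2],
      0 < hX L (z L, true) := by
  obtain ⟨w, hw⟩ := (h.2.2.1 j).1.exists_pos
  have hw_mem : w = d ∨ ∃ L ∈ [(φ.get j).1, (φ.get j).2.1, (φ.get j).2.2], w = z L := by
    have := pos_forget_apply_of_pos hw
    classical
    simp only [(h.2.2.1 j).2, clauseType, Finsupp.add_apply, single_apply] at this
    simp only [List.mem_cons, List.not_mem_nil, or_false, exists_eq_or_imp, exists_eq_left]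
    split_ifs at this <;> simp_all
  rcases hw_mem with rfl | ⟨L, hL, rfl⟩
  · exact absurd (h.hC_apply_d hdz hdy j) hw.ne'
  · exact ⟨L, hL, Nat.pos_of_ne_zero fun h0 => hw.ne' (h.hC_apply_z hz hzy h0 j)⟩

lemma satisfiable (hz : Function.Injective z) (hdz : ∀ L, d ≠ z L) (hdy : ∀ L, d ≠ y L)
    (hzy : ∀ L L', z L ≠ y L') (h : SampleSolution s d z y φ hS hC hD hX hZ) :
    ∃ a : Fin p → Bool, ∀ c ∈ φ, a c.1.1 = c.1.2 ∨ a c.2.1.1 = c.2.1.2 ∨ a c.2.2.1 = c.2.2.2 := by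
  refine ⟨fun i => decide (0 < hX (i, true) (z (i, true), true)), fun c hc => ?_⟩
  have htrue : ∀ L : Fin p × Bool, 0 < hX L (z L, true) →
      decide (0 < hX (L.1, true) (z (L.1, true), true)) = L.2 := by
    rintro ⟨i, _ | _⟩ hL
    · simpa using (h.hX_apply_z_true_pos_iff hz hzy i).mp hL
    · simpa using hL
  obtain ⟨j, rfl⟩ := List.mem_iff_get.mp hc
  obtain ⟨L, hL, hpos⟩ := h.exists_literal_pos hz hdz hdy hzy j
  simp only [List.mem_cons, List.not_mem_nil, or_false] at hL
  rcases hL with rfl | rfl | rfl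
  exacts [Or.inl (htrue _ hpos), Or.inr (Or.inl (htrue _ hpos)), Or.inr (Or.inr (htrue _ hpos))]

end SampleSolution

end Sample

section Construction

variable {α : Type*} {p : ℕ} (d : α) (z y : Fin p × Bool → α) (a : Fin p → Bool)

noncomputable def litLift (L : Fin p × Bool) : α × Bool →₀ ℕ :=
  single (z L, a L.1 == L.2) 1 + single (y L, false) 1 + single (y L, true) 1

noncomputable def clauseLift (c : (Fin p × Bool) × (Fin p × Bool) × (Fin p × Bool)) :
    α × Bool →₀ ℕ :=
  single (d, true) 1 + single (z c.1, !(a c.1.1 == c.1.2)) 1 +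
    single (z c.2.1, !(a c.2.1.1 == c.2.1.2)) 1 + single (z c.2.2, !(a c.2.2.1 == c.2.2.2)) 1

noncomputable def negLift (i : Fin p) : α × Bool →₀ ℕ :=
  single (z (i, a i), false) 1 + single (z (i, !a i), true) 1

lemma functional_litLift (L : Fin p × Bool) : Functional (litLift z y a L) :=
  Or.inr ⟨y L, y L, by simp [litLift], by simp [litLift]⟩

lemma functional_clauseLift {c : (Fin p × Bool) × (Fin p × Bool) × (Fin p × Bool)}
    (hc : a c.1.1 = c.1.2 ∨ a c.2.1.1 = c.2.1.2 ∨ a c.2.2.1 = c.2.2.2) :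
    Functional (clauseLift d z a c) := by
  rcases hc with hc | hc | hc
  · exact Or.inr ⟨z c.1, d, by simp [clauseLift, hc], by simp [clauseLift]⟩
  · exact Or.inr ⟨z c.2.1, d, by simp [clauseLift, hc], by simp [clauseLift]⟩
  · exact Or.inr ⟨z c.2.2, d, by simp [clauseLift, hc], by simp [clauseLift]⟩

lemma functional_negLift (i : Fin p) : Functional (negLift z a i) :=
  Or.inr ⟨z (i, a i), z (i, !a i), by simp [negLift], by simp [negLift]⟩

lemma forget_litLift (L : Fin p × Bool) : forget (litLift z y a L) = litType z y L := by
  simp only [litLift, litType, forget_add, forget_single, two_nsmul, add_assoc]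

lemma forget_clauseLift (c : (Fin p × Bool) × (Fin p × Bool) × (Fin p × Bool)) :
    forget (clauseLift d z a c) = clauseType d z c := by
  simp [clauseLift, clauseType, forget_add]

lemma forget_negLift (i : Fin p) :
    forget (negLift z a i) = single (z (i, false)) 1 + single (z (i, true)) 1 := by
  cases h : a i <;> simp [negLift, forget_add, h, add_comm]

lemma sgn_litLift (L : Fin p × Bool) :
    sgn (litLift z y a L) = sgn (single (z L, a L.1 == L.2) 1) := by
  simp [litLift, sgn_add]

lemma sgn_cell_eq_zero (c : (Fin p × Bool) × (Fin p × Bool) × (Fin p × Bool)) :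
    sgn (clauseLift d z a c) + sgn (single (d, false) 1) + sgn (litLift z y a c.1) +
      sgn (litLift z y a c.2.1) + sgn (litLift z y a c.2.2) = 0 := by
  have h₁ := sgn_single_not_add_sgn_single (z c.1) (a c.1.1 == c.1.2) 1
  have h₂ := sgn_single_not_add_sgn_single (z c.2.1) (a c.2.1.1 == c.2.1.2) 1
  have h₃ := sgn_single_not_add_sgn_single (z c.2.2) (a c.2.2.1 == c.2.2.2) 1
  have h₀ : sgn (single (d, true) 1) + sgn (single (d, false) 1) = 0 :=
    sgn_single_not_add_sgn_single d false 1
  simp only [clauseLift, sgn_add, sgn_litLift]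
  linear_combination (norm := abel) h₀ + h₁ + h₂ + h₃

lemma sgn_negation_eq_zero (i : Fin p) :
    sgn (litLift z y a (i, false)) + (sgn (negLift z a i) + sgn (litLift z y a (i, true))) =
      0 := by
  cases h : a i <;> simp [negLift, sgn_litLift, sgn_add, h]

lemma sampleSolution_of_satisfies {s : α}
    {φ : List ((Fin p × Bool) × (Fin p × Bool) × (Fin p × Bool))}
    (ha : ∀ c ∈ φ, a c.1.1 = c.1.2 ∨ a c.2.1.1 = c.2.1.2 ∨ a c.2.2.1 = c.2.2.2) :
    SampleSolution s d z y φ (single (s, false) 1) (fun j => clauseLift d z a (φ.get j))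
      (fun _ => single (d, false) 1) (litLift z y a) (negLift z a) := by
  have hS : sgn (single (s, false) 1) = single s 1 := by simp
  refine ⟨Or.inl ⟨s, rfl⟩, forget_single s false 1,
    fun j => ⟨functional_clauseLift d z a (ha _ (List.get_mem φ j)), forget_clauseLift d z a _⟩,
    fun _ => ⟨Or.inl ⟨d, rfl⟩, forget_single d false 1⟩,
    fun L => ⟨functional_litLift z y a L, forget_litLift z y a L⟩,
    fun i => ⟨functional_negLift z a i, forget_negLift z a i⟩,
    (grammatical_bigSentence_iff hS _ _ _).mpr
      (Finset.sum_eq_zero fun j _ => sgn_cell_eq_zero d z y a _),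
    fun i => (grammatical_cons_iff hS _).mpr ?_⟩
  simpa using sgn_negation_eq_zero z y a i

end Construction

theorem sample_solvable_iff_satisfiable_general {α : Type*} {p : ℕ} (s d : α)
    (z y : Fin p × Bool → α)
    (hz : Function.Injective z)
    (hdz : ∀ L, d ≠ z L) (hdy : ∀ L, d ≠ y L) (hzy : ∀ L L', z L ≠ y L')
    (φ : List ((Fin p × Bool) × (Fin p × Bool) × (Fin p × Bool))) :
    (∃ (hS : α × Bool →₀ ℕ) (hC hD : Fin φ.length → (α × Bool →₀ ℕ))
        (hX : Fin p × Bool → (α × Bool →₀ ℕ)) (hZ : Fin p → (α × Bool →₀ ℕ)),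
      SampleSolution s d z y φ hS hC hD hX hZ) ↔
    (∃ a : Fin p → Bool, ∀ c ∈ φ,
      a c.1.1 = c.1.2 ∨ a c.2.1.1 = c.2.1.2 ∨ a c.2.2.1 = c.2.2.2) := by
  constructor
  · rintro ⟨hS, hC, hD, hX, hZ, h⟩
    exact h.satisfiable hz hdz hdy hzy
  · rintro ⟨a, ha⟩
    exact ⟨_, _, _, _, _, sampleSolution_of_satisfies d z y a ha⟩

/-- Mathematical core of NP-completeness of grammar induction from a self-dual compact
closed category to a compact closed category: the training sample built from a 3-CNF
formula `φ` has a solution iff `φ` is satisfiable. -/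
theorem sample_solvable_iff_satisfiable {α : Type*} {p : ℕ} (s d : α)
    (z y : Fin p × Bool → α)
    (hz : Function.Injective z) (hy : Function.Injective y)
    (hsd : s ≠ d) (hsz : ∀ L, s ≠ z L) (hsy : ∀ L, s ≠ y L)
    (hdz : ∀ L, d ≠ z L) (hdy : ∀ L, d ≠ y L) (hzy : ∀ L L', z L ≠ y L')
    (φ : List ((Fin p × Bool) × (Fin p × Bool) × (Fin p × Bool))) :
    (∃ (hS : α × Bool →₀ ℕ) (hC hD : Fin φ.length → (α × Bool →₀ ℕ))
        (hX : Fin p × Bool → (α × Bool →₀ ℕ)) (hZ : Fin p → (α × Bool →₀ ℕ)),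
      SampleSolution s d z y φ hS hC hD hX hZ) ↔
    (∃ a : Fin p → Bool, ∀ c ∈ φ,
      a c.1.1 = c.1.2 ∨ a c.2.1.1 = c.2.1.2 ∨ a c.2.2.1 = c.2.2.2) :=
  sample_solvable_iff_satisfiable_general s d z y hz hdz hdy hzy φ
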